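/- Let Z ~ Beta(1, n) for a positive integer n. Then E[(log(-log(1-Z)))²] = π²/6 + (C + log n)², and consequently Var(log(-log(1-Z))) = π²/6. -/

import Mathlib

/-!
Substituting `z = 1 - exp (-t / n)` turns the `Beta(1, n)` density into `exp (-t)` and
`log (-log (1 - z))` into `log t - log n`, so both moments are combinations of the integrals
`∫₀^∞ (log t)ᵏ e⁻ᵗ dt = Γ⁽ᵏ⁾(1)` (differentiating the Mellin transform `Γ(s) = ∫ tˢ⁻¹ e⁻ᵗ dt`).
Given `Γ'(1) = -γ` and `Γ'(1/2) = -√π (γ + 2 log 2)`, differentiating the reflection formula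
`Γ(s) Γ(1 - s) = π / sin (π s)` and the duplication formula `Γ(s) Γ(s + 1/2) = 2¹⁻²ˢ √π Γ(2s)`
twice at `s = 1/2` gives two linear equations in `Γ''(1/2)` and `Γ''(1)`, whence
`Γ''(1) = γ² + π²/6`.
-/

open Real MeasureTheory Set Filter Topology Asymptotics

section

variable {𝕜 : Type*} [NontriviallyNormedField 𝕜]

lemma iteratedDeriv_comp_mul_left (n : ℕ) (f : 𝕜 → 𝕜) (c : 𝕜) :
    iteratedDeriv n (fun x => f (c * x)) = fun x => c ^ n * iteratedDeriv n f (c * x) := by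
  induction n with
  | zero => simp
  | succ n ih =>
    ext x
    simp only [iteratedDeriv_succ, ih, deriv_const_mul_field', deriv_comp_mul_left, smul_eq_mul]
    ring

lemma iteratedDeriv_two_fun_mul {f g : 𝕜 → 𝕜} {x : 𝕜} (hf : ContDiffAt 𝕜 2 f x)
    (hg : ContDiffAt 𝕜 2 g x) :
    iteratedDeriv 2 (fun y => f y * g y) x =
      iteratedDeriv 2 f x * g x + 2 * (deriv f x * deriv g x) + f x * iteratedDeriv 2 g x := by
  rw [iteratedDeriv_fun_mul hf hg]
  simp only [Finset.sum_range_succ, Finset.range_one, Finset.sum_singleton, Nat.choose_zero_right,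
    Nat.choose_succ_self_right, Nat.choose_self, iteratedDeriv_zero, iteratedDeriv_one,
    Nat.cast_one, Nat.cast_ofNat, one_mul, Nat.reduceAdd, tsub_zero, tsub_self, Nat.add_one_sub_one]
  ring

end

namespace Complex

lemma contDiffAt_Gamma {s : ℂ} (hs : Gamma s ≠ 0) {n : WithTop ℕ∞} : ContDiffAt ℂ n Gamma s := by
  have h := (differentiable_one_div_Gamma.contDiff (n := n)).contDiffAt (x := s)
  simpa [Pi.inv_def] using h.inv (inv_ne_zero hs)

lemma iteratedDeriv_two_Gamma_mul_Gamma_one_sub_one_half :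
    iteratedDeriv 2 (fun s => Gamma s * Gamma (1 - s)) (1 / 2) = (π : ℂ) ^ 3 := by
  have hπ : (π : ℂ) * (1 / 2) = ((π / 2 : ℝ) : ℂ) := by push_cast; ring
  have hsin : sin (π * (1 / 2)) = 1 := by
    rw [hπ, ← ofReal_sin, Real.sin_pi_div_two, ofReal_one]
  have hcos : cos (π * (1 / 2)) = 0 := by
    rw [hπ, ← ofReal_cos, Real.cos_pi_div_two, ofReal_zero]
  have hsinC : ContDiffAt ℂ 2 (fun s : ℂ => sin (π * s)) (1 / 2) := by fun_prop
  have hinvC : ContDiffAt ℂ 2 Inv.inv (sin (π * (1 / 2))) :=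
    contDiffAt_inv ℂ (by rw [hsin]; exact one_ne_zero)
  have hcomp : iteratedDeriv 2 (Inv.inv ∘ fun s : ℂ => sin (π * s)) (1 / 2) = π ^ 2 := by
    rw [iteratedDeriv_comp_two (f := fun s : ℂ => sin (π * s)) hinvC hsinC,
      iteratedDeriv_comp_mul_left (f := sin), deriv_comp_mul_left (f := sin)]
    simp only [one_div] at hsin hcos
    simp [hsin, hcos, iteratedDeriv_eq_iterate, iter_deriv_inv]
  have hfun : (fun s => Gamma s * Gamma (1 - s)) =
      fun s => π * (Inv.inv ∘ fun s : ℂ => sin (π * s)) s := by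
    ext s
    rw [Gamma_mul_Gamma_one_sub, div_eq_mul_inv, Function.comp_apply]
  rw [hfun, iteratedDeriv_const_mul_field, hcomp]
  ring

lemma two_cpow_one_sub_two_mul (s : ℂ) : (2 : ℂ) ^ (1 - 2 * s) = 2 * exp (-(2 * log 2) * s) := by
  rw [cpow_def_of_ne_zero two_ne_zero, mul_sub, mul_one, sub_eq_add_neg, exp_add,
    exp_log two_ne_zero]
  ring_nf

lemma iteratedDeriv_two_Gamma_mul_Gamma_add_half_one_half :
    iteratedDeriv 2 (fun s => Gamma s * Gamma (s + 1 / 2)) (1 / 2) =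
      √π * (4 * iteratedDeriv 2 Gamma 1 + 8 * eulerMascheroniConstant * log 2 + 4 * log 2 ^ 2) := by
  have hhalf : (2 : ℂ) * (1 / 2) = 1 := by norm_num
  have hGamma : ContDiffAt ℂ 2 (fun s => Gamma (2 * s)) (1 / 2) := by
    refine ContDiffAt.comp (g := Gamma) _ ?_ (by fun_prop)
    rw [hhalf]
    exact contDiffAt_Gamma (by simp)
  have hexp : ContDiffAt ℂ 2 (fun s : ℂ => 2 * exp (-(2 * log 2) * s)) (1 / 2) := by fun_prop
  simp_rw [Gamma_mul_Gamma_add_half, two_cpow_one_sub_two_mul, iteratedDeriv_mul_const_field]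
  have hexp_half : exp (-(2 * log 2) * (1 / 2)) = 1 / 2 := by
    rw [show -(2 * log 2) * (1 / 2) = -log 2 by ring, exp_neg, exp_log two_ne_zero, one_div]
  rw [iteratedDeriv_two_fun_mul hGamma hexp, iteratedDeriv_comp_mul_left, deriv_comp_mul_left,
    ← iteratedDeriv_one (f := fun s : ℂ => 2 * exp (-(2 * log 2) * s))]
  simp only [iteratedDeriv_const_mul_field, iteratedDeriv_cexp_const_mul, hhalf, hexp_half,
    Gamma_one, hasDerivAt_Gamma_one.deriv, smul_eq_mul]
  ring

lemma iteratedDeriv_two_Gamma_one :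
    iteratedDeriv 2 Gamma 1 = eulerMascheroniConstant ^ 2 + (π : ℂ) ^ 2 / 6 := by
  have hΓ : ContDiffAt ℂ 2 Gamma (1 / 2) :=
    contDiffAt_Gamma (Gamma_ne_zero_of_re_pos (by norm_num))
  have hΓ_one_sub : ContDiffAt ℂ 2 (fun s => Gamma (1 - s)) (1 / 2) :=
    ContDiffAt.comp (g := Gamma) _ (by norm_num [hΓ]) (by fun_prop)
  have hΓ_add_half : ContDiffAt ℂ 2 (fun s => Gamma (s + 1 / 2)) (1 / 2) :=
    ContDiffAt.comp (g := Gamma) _ (by norm_num; exact contDiffAt_Gamma (by simp)) (by fun_prop)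
  have hrefl := iteratedDeriv_two_Gamma_mul_Gamma_one_sub_one_half
  have hdup := iteratedDeriv_two_Gamma_mul_Gamma_add_half_one_half
  rw [iteratedDeriv_two_fun_mul hΓ hΓ_one_sub] at hrefl
  rw [iteratedDeriv_two_fun_mul hΓ hΓ_add_half] at hdup
  have hsqrt : Gamma (1 / 2) = √π := by
    rw [Gamma_one_half_eq, Real.sqrt_eq_rpow, ofReal_cpow Real.pi_pos.le]
    norm_num
  have hπ : ((√π : ℝ) : ℂ) ^ 2 = π := by
    rw [← ofReal_pow, Real.sq_sqrt Real.pi_pos.le]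
  simp only [iteratedDeriv_comp_const_sub, deriv_comp_const_sub, iteratedDeriv_comp_add_const,
    deriv_comp_add_const] at hrefl hdup
  norm_num [hsqrt, hasDerivAt_Gamma_one_half.deriv, hasDerivAt_Gamma_one.deriv] at hrefl hdup
  have hπ0 : (6 * π : ℂ) ≠ 0 := by exact_mod_cast mul_ne_zero (by norm_num) Real.pi_ne_zero
  have key : (6 * π : ℂ) *
      (iteratedDeriv 2 Gamma 1 - (eulerMascheroniConstant ^ 2 + π ^ 2 / 6)) = 0 := by
    linear_combination hrefl - 2 * (√π : ℂ) * hdup -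
      6 * (iteratedDeriv 2 Gamma 1 - eulerMascheroniConstant ^ 2) * hπ
  exact sub_eq_zero.mp ((mul_eq_zero.mp key).resolve_left hπ0)

end Complex

noncomputable def logPowExpNeg (k : ℕ) (t : ℝ) : ℂ := ((log t ^ k * exp (-t) : ℝ) : ℂ)

lemma log_smul_logPowExpNeg (k : ℕ) :
    (fun t => log t • logPowExpNeg k t) = logPowExpNeg (k + 1) := by
  ext t
  simp only [logPowExpNeg, Complex.real_smul]
  push_cast
  ring

lemma continuousOn_logPowExpNeg (k : ℕ) : ContinuousOn (logPowExpNeg k) (Ioi 0) := by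
  unfold logPowExpNeg
  refine Complex.continuous_ofReal.comp_continuousOn ?_
  exact ((continuousOn_log.mono fun t ht => ne_of_gt ht).pow k).mul (by fun_prop)

lemma logPowExpNeg_isBigO_atTop (k : ℕ) (a : ℝ) : logPowExpNeg k =O[atTop] (· ^ (-a)) := by
  induction k generalizing a with
  | zero =>
    rw [← isBigO_norm_left]
    simp only [logPowExpNeg, pow_zero, one_mul, Complex.norm_real, isBigO_norm_left]
    simpa only [neg_one_mul] using (isLittleO_exp_neg_mul_rpow_atTop zero_lt_one _).isBigO
  | succ k ih =>
    rw [← log_smul_logPowExpNeg]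
    exact isBigO_rpow_top_log_smul (lt_add_one a) (ih (a + 1))

lemma logPowExpNeg_isBigO_nhdsGT_zero (k : ℕ) {b : ℝ} (hb : 0 < b) :
    logPowExpNeg k =O[𝓝[>] 0] (· ^ (-b)) := by
  induction k generalizing b with
  | zero =>
    refine IsBigO.of_bound 1 ?_
    filter_upwards [Ioo_mem_nhdsGT one_pos] with t ht
    simp only [logPowExpNeg, pow_zero, one_mul, Complex.norm_real, norm_eq_abs, abs_exp, one_mul,
      abs_rpow_of_nonneg ht.1.le, abs_of_pos ht.1]
    calc exp (-t) ≤ 1 := exp_le_one_iff.mpr (by linarith [ht.1])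
      _ ≤ t ^ (-b) := one_le_rpow_of_pos_of_le_one_of_nonpos ht.1 ht.2.le (by linarith)
  | succ k ih =>
    rw [← log_smul_logPowExpNeg]
    exact isBigO_rpow_zero_log_smul (half_lt_self hb) (ih (half_pos hb))

lemma hasDerivAt_mellin_logPowExpNeg (k : ℕ) {s : ℂ} (hs : 0 < s.re) :
    HasDerivAt (mellin (logPowExpNeg k)) (mellin (logPowExpNeg (k + 1)) s) s := by
  rw [← log_smul_logPowExpNeg]
  exact (mellin_hasDerivAt_of_isBigO_rpow
    ((continuousOn_logPowExpNeg k).locallyIntegrableOn measurableSet_Ioi)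
    (logPowExpNeg_isBigO_atTop k _) (lt_add_one s.re)
    (logPowExpNeg_isBigO_nhdsGT_zero k (half_pos hs)) (half_lt_self hs)).2

lemma iteratedDeriv_Gamma_eq_mellin (k : ℕ) {s : ℂ} (hs : 0 < s.re) :
    iteratedDeriv k Complex.Gamma s = mellin (logPowExpNeg k) s := by
  induction k generalizing s with
  | zero =>
    rw [iteratedDeriv_zero, Complex.Gamma_eq_integral hs, Complex.GammaIntegral_eq_mellin]
    congr 1
    ext t
    simp only [logPowExpNeg, pow_zero, one_mul]
  | succ k ih =>
    have h : iteratedDeriv k Complex.Gamma =ᶠ[𝓝 s] mellin (logPowExpNeg k) := by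
      filter_upwards [(isOpen_lt continuous_const Complex.continuous_re).mem_nhds hs] with z hz
      exact ih hz
    rw [iteratedDeriv_succ, h.deriv_eq, (hasDerivAt_mellin_logPowExpNeg k hs).deriv]

lemma integrableOn_log_pow_mul_exp_neg (k : ℕ) :
    IntegrableOn (fun t => log t ^ k * exp (-t)) (Ioi 0) := by
  have h : MellinConvergent (logPowExpNeg k) 1 :=
    mellinConvergent_of_isBigO_rpow
      ((continuousOn_logPowExpNeg k).locallyIntegrableOn measurableSet_Ioi)
      (logPowExpNeg_isBigO_atTop k 2) (by norm_num)
      (logPowExpNeg_isBigO_nhdsGT_zero k one_half_pos) (by norm_num)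
  simp only [MellinConvergent, sub_self, Complex.cpow_zero, one_smul, logPowExpNeg] at h
  simpa only [RCLike.re_to_complex, Complex.ofReal_re, IntegrableOn] using h.re

lemma ofReal_integral_log_pow_mul_exp_neg (k : ℕ) :
    ((∫ t in Ioi 0, log t ^ k * exp (-t) : ℝ) : ℂ) = iteratedDeriv k Complex.Gamma 1 := by
  rw [iteratedDeriv_Gamma_eq_mellin k (by norm_num), mellin, ← integral_complex_ofReal]
  simp only [sub_self, Complex.cpow_zero, one_smul, logPowExpNeg]

lemma integral_log_mul_exp_neg :
    ∫ t in Ioi 0, log t * exp (-t) = -eulerMascheroniConstant := by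
  have h := ofReal_integral_log_pow_mul_exp_neg 1
  rw [iteratedDeriv_one, Complex.hasDerivAt_Gamma_one.deriv] at h
  simp only [pow_one] at h
  exact_mod_cast h

lemma integral_log_sq_mul_exp_neg :
    ∫ t in Ioi 0, log t ^ 2 * exp (-t) = eulerMascheroniConstant ^ 2 + π ^ 2 / 6 := by
  have h := ofReal_integral_log_pow_mul_exp_neg 2
  rw [Complex.iteratedDeriv_two_Gamma_one] at h
  exact_mod_cast h

lemma integral_log_sub_mul_exp_neg (c : ℝ) :
    ∫ t in Ioi 0, (log t - c) * exp (-t) = -(eulerMascheroniConstant + c) := by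
  have h0 := integrableOn_log_pow_mul_exp_neg 0
  have h1 := integrableOn_log_pow_mul_exp_neg 1
  simp only [pow_zero, one_mul, pow_one] at h0 h1
  simp_rw [sub_mul]
  rw [integral_sub h1 (h0.const_mul c), integral_const_mul, integral_log_mul_exp_neg,
    integral_exp_neg_Ioi_zero]
  ring

lemma integral_log_sub_sq_mul_exp_neg (c : ℝ) :
    ∫ t in Ioi 0, (log t - c) ^ 2 * exp (-t) = π ^ 2 / 6 + (eulerMascheroniConstant + c) ^ 2 := by
  have h0 := integrableOn_log_pow_mul_exp_neg 0
  have h1 := integrableOn_log_pow_mul_exp_neg 1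
  have h2 := integrableOn_log_pow_mul_exp_neg 2
  simp only [pow_zero, one_mul, pow_one] at h0 h1
  have hexpand : ∀ t, (log t - c) ^ 2 * exp (-t) =
      log t ^ 2 * exp (-t) - 2 * c * (log t * exp (-t)) + c ^ 2 * exp (-t) := fun t => by ring
  simp_rw [hexpand]
  rw [integral_add (h2.fun_sub (h1.const_mul _)) (h0.const_mul _),
    integral_sub h2 (h1.const_mul _), integral_const_mul, integral_const_mul,
    integral_log_sq_mul_exp_neg, integral_log_mul_exp_neg, integral_exp_neg_Ioi_zero]
  ring

lemma image_one_sub_exp_neg_div_Ioi {a : ℝ} (ha : 0 < a) :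
    (fun t => 1 - exp (-t / a)) '' Ioi 0 = Ioo 0 1 := by
  ext z
  constructor
  · rintro ⟨t, ht, rfl⟩
    have hlt : exp (-t / a) < 1 :=
      exp_lt_one_iff.mpr (div_neg_of_neg_of_pos (neg_neg_of_pos ht) ha)
    exact ⟨by linarith, by linarith [exp_pos (-t / a)]⟩
  · rintro ⟨hz0, hz1⟩
    refine ⟨-(a * log (1 - z)), ?_, ?_⟩
    · exact neg_pos.mpr (mul_neg_of_pos_of_neg ha (log_neg (by linarith) (by linarith)))
    · simp only [neg_neg, mul_div_cancel_left₀ _ ha.ne', exp_log (sub_pos.mpr hz1)]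
      ring

lemma integral_Ioo_comp_neg_log_one_sub_mul {n : ℕ} (hn : 0 < n) (g : ℝ → ℝ) :
    ∫ z in Ioo 0 1, g (-log (1 - z)) * (n * (1 - z) ^ (n - 1)) =
      ∫ t in Ioi 0, g (t / n) * exp (-t) := by
  have hn' : (0 : ℝ) < n := by exact_mod_cast hn
  have hderiv : ∀ t ∈ Ioi (0 : ℝ), HasDerivWithinAt (fun t => 1 - exp (-t / n))
      (exp (-t / n) / n) (Ioi 0) t := fun t _ => by
    have h := ((hasDerivAt_neg t).div_const (n : ℝ)).exp.const_sub 1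
    exact (h.congr_deriv (by ring)).hasDerivWithinAt
  have hinj : InjOn (fun t => 1 - exp (-t / n)) (Ioi 0) := fun a _ b _ h => by
    have := exp_injective (sub_right_injective h)
    field_simp at this
    linarith
  rw [← image_one_sub_exp_neg_div_Ioi hn',
    integral_image_eq_integral_abs_deriv_smul measurableSet_Ioi hderiv hinj]
  refine setIntegral_congr_fun measurableSet_Ioi fun t _ => ?_
  have hpow : exp (-(t / n)) ^ (n - 1) * exp (-(t / n)) = exp (-t) := by
    rw [← pow_succ, Nat.sub_add_cancel hn, ← exp_nat_mul]
    field_simp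
  simp only [sub_sub_cancel, log_exp, neg_div, neg_neg, smul_eq_mul,
    abs_of_pos (div_pos (exp_pos _) hn')]
  rw [← hpow]
  field_simp

lemma integral_Ioo_comp_log_neg_log_one_sub_mul {n : ℕ} (hn : 0 < n) (g : ℝ → ℝ) :
    ∫ z in Ioo 0 1, g (log (-log (1 - z))) * (n * (1 - z) ^ (n - 1)) =
      ∫ t in Ioi 0, g (log t - log n) * exp (-t) := by
  refine (integral_Ioo_comp_neg_log_one_sub_mul hn (g ∘ log)).trans ?_
  refine setIntegral_congr_fun measurableSet_Ioi fun t ht => ?_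
  rw [Function.comp_apply, log_div (ne_of_gt ht) (by positivity)]

/-- For `Z ~ Beta(1, n)`, `E[(log(-log(1-Z)))²] = π²/6 + (γ + log n)²` and consequently
`Var(log(-log(1-Z))) = π²/6`. -/
theorem beta_one_n_loglog_sq_and_var (n : ℕ) (hn : 1 ≤ n) :
    (∫ z in Set.Ioo (0 : ℝ) 1,
        (Real.log (-Real.log (1 - z))) ^ 2 * ((n : ℝ) * (1 - z) ^ (n - 1))) =
      Real.pi ^ 2 / 6 + (Real.eulerMascheroniConstant + Real.log n) ^ 2 ∧
    (∫ z in Set.Ioo (0 : ℝ) 1,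
        (Real.log (-Real.log (1 - z))) ^ 2 * ((n : ℝ) * (1 - z) ^ (n - 1))) -
      (∫ z in Set.Ioo (0 : ℝ) 1,
        Real.log (-Real.log (1 - z)) * ((n : ℝ) * (1 - z) ^ (n - 1))) ^ 2 =
      Real.pi ^ 2 / 6 := by
  have hsq := (integral_Ioo_comp_log_neg_log_one_sub_mul hn (· ^ 2)).trans
    (integral_log_sub_sq_mul_exp_neg (log n))
  have hmean := (integral_Ioo_comp_log_neg_log_one_sub_mul hn fun x => x).trans
    (integral_log_sub_mul_exp_neg (log n))
  refine ⟨hsq, ?_⟩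
  rw [hsq, hmean]
  ring
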